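/- Let R be a commutative ring and n, m ≥ 1, and let β_{n,m} be the (n+m)×(n+m) matrix given in block form by [[A_{m,n}, I_m],[(−1)^m I_n, 0]], where A_{m,n} is the m×n matrix with (i,j) entry (−1)^{i+1}·2. Then for every B ∈ Aut(X^{#n}) and every C ∈ Aut(X^{#m}) (viewed as matrices) one has the naturality identity β_{n,m} · (B ⊕ C) = (C ⊕ B) · β_{n,m}, where B ⊕ C denotes the block-diagonal matrix with blocks B and C. -/
import Mathlib


/-- The bilinear form of the formed space with boundary `X^{#n}`. -/
def lamX (R : Type) [CommRing R] (n : ℕ) (x y : Fin n → R) : R :=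
  ∑ i : Fin n, ∑ j : Fin n, (if (i : ℕ) < (j : ℕ) then x i * y j
    else if (j : ℕ) < (i : ℕ) then -(x i * y j) else 0)

/-- The boundary map of `X^{#n}`. -/
def bdX (R : Type) [CommRing R] (n : ℕ) (x : Fin n → R) : R := ∑ i, x i

/-- The block braiding matrix `β_{n,m} = [[A_{m,n}, I_m], [(-1)^m I_n, 0]]`, where `A_{m,n}` is
the `m × n` matrix with `(i,j)` entry `(-1)^(i+1)·2` (1-indexed; `(-1)^i·2` for 0-indexed `i`). -/
def betaMat (R : Type) [CommRing R] (n m : ℕ) : Matrix (Fin (n + m)) (Fin (n + m)) R :=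
  Matrix.of fun i j =>
    if (i : ℕ) < m then
      (if (j : ℕ) < n then (-1 : R) ^ (i : ℕ) * 2
       else if (j : ℕ) = n + (i : ℕ) then 1 else 0)
    else
      (if (j : ℕ) + m = (i : ℕ) then (-1 : R) ^ m else 0)

/-- The block-diagonal matrix with blocks `P` (on the first `p` coordinates) and `Q` (on the
last `q` coordinates), of total size `N = p + q`. -/
def blockDiag (R : Type) [CommRing R] {p q N : ℕ} (h : p + q = N)
    (P : Matrix (Fin p) (Fin p) R) (Q : Matrix (Fin q) (Fin q) R) :
    Matrix (Fin N) (Fin N) R :=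
  Matrix.of fun i j =>
    if hi : (i : ℕ) < p then
      (if hj : (j : ℕ) < p then P ⟨i, hi⟩ ⟨j, hj⟩ else 0)
    else
      (if hj : p ≤ (j : ℕ) then
        Q ⟨(i : ℕ) - p, by have := i.2; omega⟩ ⟨(j : ℕ) - p, by have := j.2; omega⟩
      else 0)



lemma lamX_sub_right (R : Type) [CommRing R] (m : ℕ) (x y z : Fin m → R) :
    lamX R m x (y - z) = lamX R m x y - lamX R m x z := by
  simp only [lamX, Pi.sub_apply, ← Finset.sum_sub_distrib]
  refine Finset.sum_congr rfl fun i _ => Finset.sum_congr rfl fun j _ => ?_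
  split_ifs <;> ring

lemma bdX_sub (R : Type) [CommRing R] (m : ℕ) (y z : Fin m → R) :
    bdX R m (y - z) = bdX R m y - bdX R m z := by
  simp [bdX, Finset.sum_sub_distrib]

lemma lamX_single (R : Type) [CommRing R] (m : ℕ) (i : Fin m) (z : Fin m → R) :
    lamX R m (Pi.single i 1) z
      = ∑ j : Fin m, (if (i : ℕ) < (j : ℕ) then z j
          else if (j : ℕ) < (i : ℕ) then -z j else 0) := by
  unfold lamX
  rw [Finset.sum_eq_single i]
  · refine Finset.sum_congr rfl fun j _ => ?_
    simp [Pi.single_eq_same]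
  · intro b _ hb
    apply Finset.sum_eq_zero
    intro j _
    simp [Pi.single_eq_of_ne hb]
  · simp

lemma eq_zero_of_lam (R : Type) [CommRing R] (m : ℕ) (z : Fin m → R)
    (h1 : ∀ y : Fin m → R, lamX R m y z = 0) (h2 : bdX R m z = 0) : z = 0 := by
  have key : ∀ i : Fin m,
      z i = -(2 * ∑ j ∈ Finset.univ.filter (fun j : Fin m => (j : ℕ) < (i : ℕ)), z j) := by
    intro i
    have h := h1 (Pi.single i 1)
    rw [lamX_single] at h
    have hsplit : ∀ j : Fin m,
        (if (i : ℕ) < (j : ℕ) then z j else if (j : ℕ) < (i : ℕ) then -z j else 0)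
          = z j - (if (j : ℕ) < (i : ℕ) then 2 * z j else 0)
              - (if j = i then z i else 0) := by
      intro j
      rcases lt_trichotomy ((i : ℕ)) ((j : ℕ)) with hlt | heq | hgt
      · have : j ≠ i := fun hji => by simp [hji] at hlt
        simp [hlt, Nat.lt_asymm hlt, this]
      · have : j = i := Fin.ext heq.symm
        simp [this]
      · have : j ≠ i := fun hji => by simp [hji] at hgt
        simp [Nat.lt_asymm hgt, hgt, this]
        ring
    rw [Finset.sum_congr rfl fun j _ => hsplit j] at h
    simp only [Finset.sum_sub_distrib, Finset.sum_ite_eq' Finset.univ i, Finset.mem_univ,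
      if_true, ← Finset.sum_filter] at h
    have hb : ∑ j : Fin m, z j = 0 := h2
    rw [hb] at h
    have hf : ∑ j ∈ Finset.univ.filter (fun j : Fin m => (j : ℕ) < (i : ℕ)), 2 * z j
        = 2 * ∑ j ∈ Finset.univ.filter (fun j : Fin m => (j : ℕ) < (i : ℕ)), z j := by
      rw [Finset.mul_sum]
    rw [hf] at h
    linear_combination -h
  have H : ∀ k : ℕ, ∀ i : Fin m, (i : ℕ) = k → z i = 0 := by
    intro k
    induction k using Nat.strong_induction_on with
    | _ k ih =>
      intro i hik
      rw [key i, Finset.sum_eq_zero, mul_zero, neg_zero]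
      intro j hj
      simp only [Finset.mem_filter, Finset.mem_univ, true_and] at hj
      exact ih (j : ℕ) (hik ▸ hj) j rfl
  funext i
  exact H (i : ℕ) i rfl

lemma lamX_w (R : Type) [CommRing R] (m : ℕ) (x : Fin m → R) :
    lamX R m x (fun j : Fin m => (-1 : R) ^ (j : ℕ))
      = ((∑ j : Fin m, (-1 : R) ^ (j : ℕ)) - 1) * bdX R m x := by
  set S : R := ∑ j : Fin m, (-1 : R) ^ (j : ℕ) with hS
  have inner : ∀ i : Fin m,
      (∑ j : Fin m, (if (i : ℕ) < (j : ℕ) then x i * (-1 : R) ^ (j : ℕ)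
        else if (j : ℕ) < (i : ℕ) then -(x i * (-1 : R) ^ (j : ℕ)) else 0))
      = x i * (S - 1) := by
    intro i
    have hsplit : ∀ j : Fin m,
        (if (i : ℕ) < (j : ℕ) then x i * (-1 : R) ^ (j : ℕ)
          else if (j : ℕ) < (i : ℕ) then -(x i * (-1 : R) ^ (j : ℕ)) else 0)
          = x i * (-1 : R) ^ (j : ℕ)
            - (if (j : ℕ) < (i : ℕ) then 2 * (x i * (-1 : R) ^ (j : ℕ)) else 0)
            - (if j = i then x i * (-1 : R) ^ (i : ℕ) else 0) := by
      intro j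
      rcases lt_trichotomy ((i : ℕ)) ((j : ℕ)) with hlt | heq | hgt
      · have : j ≠ i := fun hji => by simp [hji] at hlt
        simp [hlt, Nat.lt_asymm hlt, this]
      · have : j = i := Fin.ext heq.symm
        simp [this]
      · have : j ≠ i := fun hji => by simp [hji] at hgt
        simp [Nat.lt_asymm hgt, hgt, this]
        ring
    rw [Finset.sum_congr rfl fun j _ => hsplit j]
    simp only [Finset.sum_sub_distrib, Finset.sum_ite_eq' Finset.univ i, Finset.mem_univ,
      if_true, ← Finset.sum_filter, ← Finset.mul_sum]
    have hL : ∑ j ∈ Finset.univ.filter (fun j : Fin m => (j : ℕ) < (i : ℕ)),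
        (-1 : R) ^ (j : ℕ) = if Even (i : ℕ) then 0 else 1 := by
      have h1 : (Finset.range m).filter (fun j => j < (i : ℕ)) = Finset.range (i : ℕ) := by
        ext a
        simp only [Finset.mem_filter, Finset.mem_range]
        exact ⟨fun h => h.2, fun h => ⟨h.trans i.2, h⟩⟩
      rw [Finset.sum_filter,
        Fin.sum_univ_eq_sum_range (fun j => if j < (i : ℕ) then (-1 : R) ^ j else 0) m,
        ← Finset.sum_filter, h1, neg_one_geom_sum]
    rw [hL]
    rcases Nat.even_or_odd (i : ℕ) with he | ho
    · rw [if_pos he, he.neg_one_pow]; ring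
    · rw [if_neg (Nat.not_even_iff_odd.mpr ho), ho.neg_one_pow]; ring
  unfold lamX
  rw [Finset.sum_congr rfl fun i _ => inner i]
  rw [← Finset.sum_mul, bdX]
  ring

lemma mulVec_w_fixed (R : Type) [CommRing R] (m : ℕ) (C : Matrix (Fin m) (Fin m) R)
    (hCunit : IsUnit C)
    (hCl : ∀ x y : Fin m → R, lamX R m (C.mulVec x) (C.mulVec y) = lamX R m x y)
    (hCb : ∀ x : Fin m → R, bdX R m (C.mulVec x) = bdX R m x) :
    C.mulVec (fun j : Fin m => (-1 : R) ^ (j : ℕ)) = fun j : Fin m => (-1 : R) ^ (j : ℕ) := by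
  set w : Fin m → R := fun j : Fin m => (-1 : R) ^ (j : ℕ) with hw
  obtain ⟨u, hu⟩ := hCunit
  have hsurj : ∀ y : Fin m → R, C.mulVec ((↑u⁻¹ : Matrix (Fin m) (Fin m) R).mulVec y) = y := by
    intro y
    rw [Matrix.mulVec_mulVec, ← hu, Units.mul_inv, Matrix.one_mulVec]
  have hz : C.mulVec w - w = 0 := by
    apply eq_zero_of_lam
    · intro y
      rw [lamX_sub_right]
      obtain ⟨x, hx⟩ : ∃ x, C.mulVec x = y := ⟨_, hsurj y⟩
      rw [← hx, hCl x w, lamX_w, lamX_w, ← hCb x]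
      ring
    · rw [bdX_sub, hCb w, sub_self]
  have := sub_eq_zero.mp hz
  exact this

/-- naturality of the braiding: for `B ∈ Aut(X^{#n})` and `C ∈ Aut(X^{#m})`,
one has `β_{n,m} · (B ⊕ C) = (C ⊕ B) · β_{n,m}`. -/
theorem betaMat_natural (R : Type) [CommRing R] (n m : ℕ) (hn : 1 ≤ n) (hm : 1 ≤ m)
    (B : Matrix (Fin n) (Fin n) R) (C : Matrix (Fin m) (Fin m) R)
    (hBunit : IsUnit B) (hCunit : IsUnit C)
    (hBl : ∀ x y : Fin n → R, lamX R n (B.mulVec x) (B.mulVec y) = lamX R n x y)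
    (hBb : ∀ x : Fin n → R, bdX R n (B.mulVec x) = bdX R n x)
    (hCl : ∀ x y : Fin m → R, lamX R m (C.mulVec x) (C.mulVec y) = lamX R m x y)
    (hCb : ∀ x : Fin m → R, bdX R m (C.mulVec x) = bdX R m x) :
    betaMat R n m * blockDiag R rfl B C
      = blockDiag R (by omega : m + n = n + m) C B * betaMat R n m := by
  -- column sums of B are 1
  have hBcol : ∀ j : Fin n, ∑ k : Fin n, B k j = 1 := by
    intro j
    have h := hBb (Pi.single j 1)
    simpa [bdX, Matrix.mulVec_single] using h
  -- alternating row sums of C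
  have hCrow : ∀ i : Fin m, ∑ k : Fin m, C i k * (-1 : R) ^ (k : ℕ) = (-1 : R) ^ (i : ℕ) := by
    intro i
    have h := congrFun (mulVec_w_fixed R m C hCunit hCl hCb) i
    simpa [Matrix.mulVec, dotProduct] using h
  ext i j
  rw [Matrix.mul_apply, Matrix.mul_apply]
  have hre : (∑ k : Fin (n + m), blockDiag R (show m + n = n + m by omega) C B i k
        * betaMat R n m k j)
      = ∑ k : Fin (m + n), blockDiag R (show m + n = n + m by omega) C B i
          (finCongr (show m + n = n + m by omega) k)
        * betaMat R n m (finCongr (show m + n = n + m by omega) k) j :=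
    (Fintype.sum_equiv (finCongr (show m + n = n + m by omega)) _ _ (fun k => rfl)).symm
  rw [hre]
  rw [Fin.sum_univ_add, Fin.sum_univ_add]
  simp only [betaMat, blockDiag, Matrix.of_apply, finCongr_apply, Fin.coe_cast,
    Fin.coe_castAdd, Fin.coe_natAdd]
  by_cases hi : (i : ℕ) < m <;> by_cases hj : (j : ℕ) < n
  · have hf1 : ∀ x : Fin m, ¬ (n + (x : ℕ) < n) := fun x => by omega
    have hf2 : ∀ x : Fin n, ¬ (m + (x : ℕ) < m) := fun x => by omega
    have hnj : ¬ (n ≤ (j : ℕ)) := by omega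
    simp only [hi, hj, if_true, Fin.is_lt, Fin.eta, hf1, hf2, hnj, if_false, dif_neg,
      not_false_iff, dif_pos, mul_zero, zero_mul, Finset.sum_const_zero, add_zero]
    rw [← Finset.mul_sum, hBcol ⟨j, hj⟩, mul_one]
    have hr : ∑ x : Fin m, C ⟨(i : ℕ), hi⟩ x * ((-1 : R) ^ (x : ℕ) * 2)
        = (∑ x : Fin m, C ⟨(i : ℕ), hi⟩ x * (-1 : R) ^ (x : ℕ)) * 2 := by
      rw [Finset.sum_mul]
      exact Finset.sum_congr rfl fun x _ => by ring
    rw [hr, hCrow ⟨(i : ℕ), hi⟩]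
  · -- i < m, j ≥ n
    have hf1 : ∀ x : Fin m, ¬ (n + (x : ℕ) < n) := fun x => by omega
    have hf2 : ∀ x : Fin n, ¬ (m + (x : ℕ) < m) := fun x => by omega
    have hnj : n ≤ (j : ℕ) := by omega
    simp only [hi, hj, if_true, Fin.is_lt, Fin.eta, hf1, hf2, hnj, if_false, dif_neg,
      not_false_iff, dif_pos, mul_zero, zero_mul, mul_one,
      Finset.sum_const_zero, add_zero, zero_add]
    have hjm : (j : ℕ) - n < m := by have := j.2; omega
    rw [Finset.sum_eq_single (⟨(i : ℕ), hi⟩ : Fin m)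
      (fun b _ hb => by
        rw [if_neg fun h => hb (Fin.ext (show (b : ℕ) = (i : ℕ) by omega)), zero_mul])
      (fun h => absurd (Finset.mem_univ _) h)]
    rw [Finset.sum_eq_single (⟨(j : ℕ) - n, hjm⟩ : Fin m)
      (fun b _ hb => by
        rw [if_neg fun h => hb (Fin.ext (show (b : ℕ) = (j : ℕ) - n by omega)), mul_zero])
      (fun h => absurd (Finset.mem_univ _) h)]
    rw [if_pos rfl, one_mul, if_pos (show (j : ℕ) = n + ((j : ℕ) - n) by omega), mul_one]
    congr 1
    exact Fin.ext (by simp)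
  · -- i ≥ m, j < n
    have hf1 : ∀ x : Fin m, ¬ ((n + (x : ℕ)) + m = (i : ℕ)) := fun x => by
      have := i.2; omega
    have hf2 : ∀ x : Fin n, ¬ (m + (x : ℕ) < m) := fun x => by omega
    have hnj : ¬ (n ≤ (j : ℕ)) := by omega
    have hf3 : ∀ x : Fin m, ¬ (m ≤ (x : ℕ)) := fun x => by omega
    have him : (i : ℕ) - m < n := by have := i.2; omega
    simp only [hi, hj, if_true, Fin.is_lt, Fin.eta, hf1, hf2, hf3, hnj, Nat.le_add_right,
      Nat.add_sub_cancel_left, if_false, dif_neg, not_false_iff, dif_pos, mul_zero, zero_mul,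
      mul_one, one_mul, Finset.sum_const_zero, add_zero, zero_add]
    rw [Finset.sum_eq_single (⟨(i : ℕ) - m, him⟩ : Fin n)
      (fun b _ hb => by
        rw [if_neg fun h => hb (Fin.ext (show (b : ℕ) = (i : ℕ) - m by omega)), zero_mul])
      (fun h => absurd (Finset.mem_univ _) h)]
    rw [Finset.sum_eq_single (⟨(j : ℕ), hj⟩ : Fin n)
      (fun b _ hb => by
        rw [if_neg fun h => hb (Fin.ext (show (b : ℕ) = (j : ℕ) by omega)), mul_zero])
      (fun h => absurd (Finset.mem_univ _) h)]
    rw [if_pos (show ((⟨(i : ℕ) - m, him⟩ : Fin n) : ℕ) + m = (i : ℕ) by simp; omega),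
      if_pos (show (j : ℕ) + m = m + ((⟨(j : ℕ), hj⟩ : Fin n) : ℕ) by simp; omega)]
    ring
  · -- i ≥ m, j ≥ n
    have hf1 : ∀ x : Fin m, ¬ ((n + (x : ℕ)) + m = (i : ℕ)) := fun x => by
      have := i.2; omega
    have hf3 : ∀ x : Fin m, ¬ (m ≤ (x : ℕ)) := fun x => by omega
    have hf4 : ∀ x : Fin n, ¬ ((j : ℕ) + m = m + (x : ℕ)) := fun x => by
      have := x.2; omega
    have hf2 : ∀ x : Fin n, ¬ (m + (x : ℕ) < m) := fun x => by omega
    have hnj : n ≤ (j : ℕ) := by omega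
    have hjn : ¬ ((j : ℕ) < n) := hj
    simp only [hi, hjn, if_true, Fin.is_lt, Fin.eta, hf1, hf2, hf3, hf4, hnj, Nat.le_add_right,
      Nat.add_sub_cancel_left, if_false, dif_neg, not_false_iff, dif_pos, mul_zero, zero_mul,
      mul_one, one_mul, Finset.sum_const_zero, add_zero, zero_add]
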